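/- arXiv:2404.02401 — 3 statements merged into one kernel-verified Lean document; each statement's English description precedes it below -/
import Mathlib

section
/- Let σ ∈ C([0,T]; ℝ^{d×d}) and suppose S ∈ C¹([0,T]; ℝ^{d×d}) solves S' = −S² − σᵀS − Sσ − σᵀσ with S(T) = 0. Then S(t)ᵀ = S(t) for all t ∈ [0,T], and the function χ = S + σ satisfies the integral identity σ(t) = χ(t) − ∫_t^T χ(u)ᵀ χ(u) du for all t ∈ [0,T]. -/
/-!
The Riccati right-hand side factors as `-(S + σᵀ)(S + σ)`. Hence `D = Sᵀ - S` solves the linear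
equation `D' = -(χᵀ D + D χ)` with `D(T) = 0`; its coefficients are bounded on `[0, T]`, so `D = 0`
by uniqueness of solutions. Once `S` is symmetric, `S' = -χᵀχ`, and integrating over `[t, T]`
gives `S(t) = ∫ₜᵀ χᵀχ`, which is the identity.
-/

open MeasureTheory Matrix intervalIntegral Set NNReal

attribute [local instance] Matrix.normedAddCommGroup Matrix.normedSpace

theorem ODE_solution_eq_zero_of_mem_Icc_left {E : Type*} [NormedAddCommGroup E] [NormedSpace ℝ E]
    {v : ℝ → E → E} {K : ℝ≥0} {f : ℝ → E} {a b : ℝ}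
    (hv : ∀ t ∈ Ioc a b, LipschitzWith K (v t)) (hv0 : ∀ t ∈ Ioc a b, v t 0 = 0)
    (hf : ∀ t ∈ Icc a b, HasDerivWithinAt f (v t (f t)) (Icc a b) t) (hb : f b = 0) :
    EqOn f 0 (Icc a b) :=
  ODE_solution_unique_of_mem_Icc_left (s := fun _ => univ) (fun t ht => (hv t ht).lipschitzOnWith)
    (HasDerivWithinAt.continuousOn hf)
    (fun t ht => (hf t (Ioc_subset_Icc_self ht)).mono_of_mem_nhdsWithin (Icc_mem_nhdsLE_of_mem ht))
    (fun _ _ => trivial) continuousOn_const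
    (fun t ht => by rw [Pi.zero_apply, hv0 t ht]; exact hasDerivWithinAt_const _ _ _)
    (fun _ _ => trivial) hb

theorem intervalIntegral.integral_eq_sub_of_hasDerivWithinAt_Icc {E : Type*}
    [NormedAddCommGroup E] [NormedSpace ℝ E] [CompleteSpace E] {f f' : ℝ → E} {a b : ℝ}
    (hab : a ≤ b) (hf : ∀ t ∈ Icc a b, HasDerivWithinAt f (f' t) (Icc a b) t)
    (hf' : ContinuousOn f' (Icc a b)) : ∫ u in a..b, f' u = f b - f a :=
  integral_eq_sub_of_hasDerivAt_of_le hab (HasDerivWithinAt.continuousOn hf)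
    (fun t ht => (hf t (Ioo_subset_Icc_self ht)).hasDerivAt (Icc_mem_nhds ht.1 ht.2))
    (hf'.intervalIntegrable_of_Icc hab)

theorem HasDerivWithinAt.matrix_transpose {m n : Type*} [Fintype m] [Fintype n]
    {f : ℝ → Matrix m n ℝ} {f' : Matrix m n ℝ} {s : Set ℝ} {t : ℝ}
    (h : HasDerivWithinAt f f' s t) : HasDerivWithinAt (fun u => (f u)ᵀ) f'ᵀ s t :=
  (LinearMap.toContinuousLinearMap
    (transposeLinearEquiv m n ℝ ℝ).toLinearMap).hasFDerivAt.comp_hasDerivWithinAt t h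

namespace Matrix

variable {l m n : Type*} [Fintype l] [Fintype m] [Fintype n]

theorem norm_mul_le_card_mul (A : Matrix l m ℝ) (B : Matrix m n ℝ) :
    ‖A * B‖ ≤ Fintype.card m * ‖A‖ * ‖B‖ := by
  rw [norm_le_iff (by positivity)]
  intro i j
  calc ‖(A * B) i j‖ = ‖∑ k, A i k * B k j‖ := by rw [mul_apply]
    _ ≤ ∑ k, ‖A i k * B k j‖ := norm_sum_le _ _
    _ ≤ ∑ _k : m, ‖A‖ * ‖B‖ := by
        gcongr with k
        rw [norm_mul]
        gcongr <;> exact norm_entry_le_entrywise_sup_norm _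
    _ = Fintype.card m * ‖A‖ * ‖B‖ := by simp [mul_assoc]

theorem lipschitzWith_transpose_mul_add_mul (A : Matrix n n ℝ) :
    LipschitzWith (2 * Fintype.card n * ‖A‖₊) fun X : Matrix n n ℝ => Aᵀ * X + X * A := by
  refine LipschitzWith.of_dist_le_mul fun X Y => ?_
  rw [dist_eq_norm, dist_eq_norm]
  calc ‖Aᵀ * X + X * A - (Aᵀ * Y + Y * A)‖ = ‖Aᵀ * (X - Y) + (X - Y) * A‖ := by
        rw [Matrix.mul_sub, Matrix.sub_mul]; abel_nf
    _ ≤ Fintype.card n * ‖Aᵀ‖ * ‖X - Y‖ + Fintype.card n * ‖X - Y‖ * ‖A‖ :=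
        (norm_add_le _ _).trans (add_le_add (norm_mul_le_card_mul _ _) (norm_mul_le_card_mul _ _))
    _ = (2 * Fintype.card n * ‖A‖₊ : ℝ≥0) * ‖X - Y‖ := by
        rw [norm_transpose]; push_cast; ring

theorem transpose_eq_of_hasDerivWithinAt_riccati {a b : ℝ} {σ S : ℝ → Matrix n n ℝ}
    (hσ : ContinuousOn σ (Icc a b))
    (hS : ∀ t ∈ Icc a b, HasDerivWithinAt S (-((S t + (σ t)ᵀ) * (S t + σ t))) (Icc a b) t)
    (hb : (S b)ᵀ = S b) : ∀ t ∈ Icc a b, (S t)ᵀ = S t := by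
  obtain ⟨C, hC⟩ := isCompact_Icc.exists_bound_of_continuousOn
    ((HasDerivWithinAt.continuousOn hS).add hσ)
  have hD : EqOn (fun t => (S t)ᵀ - S t) 0 (Icc a b) := by
    refine ODE_solution_eq_zero_of_mem_Icc_left (K := 2 * Fintype.card n * C.toNNReal)
      (v := fun t X => -((S t + σ t)ᵀ * X + X * (S t + σ t))) (fun t ht => ?_)
      (fun t _ => by simp) (fun t ht => ?_) (by simp [hb])
    · have hCt := hC t (Ioc_subset_Icc_self ht)
      refine (lipschitzWith_transpose_mul_add_mul _).neg.weaken ?_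
      gcongr
      exact (Real.le_toNNReal_iff_coe_le ((norm_nonneg _).trans hCt)).2 hCt
    · refine ((hS t ht).matrix_transpose.sub (hS t ht)).congr_deriv ?_
      simp only [transpose_neg, transpose_mul, transpose_add, transpose_transpose]
      noncomm_ring
  exact fun t ht => sub_eq_zero.mp (hD ht)

end Matrix

theorem stmt14_general (T : ℝ) (d : ℕ)
    (σ : ℝ → Matrix (Fin d) (Fin d) ℝ)
    (hσ : ContinuousOn σ (Set.Icc 0 T))
    (S : ℝ → Matrix (Fin d) (Fin d) ℝ)
    (hS : ∀ t ∈ Set.Icc (0:ℝ) T,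
      HasDerivWithinAt S
        (-(S t * S t) - (σ t)ᵀ * S t - S t * σ t - (σ t)ᵀ * σ t)
        (Set.Icc (0:ℝ) T) t)
    (hST : S T = 0) :
    (∀ t ∈ Set.Icc (0:ℝ) T, (S t)ᵀ = S t) ∧
    (∀ t ∈ Set.Icc (0:ℝ) T,
      σ t = (S t + σ t) - ∫ u in t..T, (S u + σ u)ᵀ * (S u + σ u)) := by
  have hS' : ∀ t ∈ Icc 0 T, HasDerivWithinAt S (-((S t + (σ t)ᵀ) * (S t + σ t))) (Icc 0 T) t :=
    fun t ht => (hS t ht).congr_deriv (by noncomm_ring)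
  have hsymm := transpose_eq_of_hasDerivWithinAt_riccati hσ hS' (by simp [hST])
  refine ⟨hsymm, fun t ht => ?_⟩
  have hsub : Icc t T ⊆ Icc 0 T := Icc_subset_Icc_left ht.1
  have hderiv : ∀ u ∈ Icc t T,
      HasDerivWithinAt S (-((S u + σ u)ᵀ * (S u + σ u))) (Icc t T) u := fun u hu => by
    rw [transpose_add, hsymm u (hsub hu)]
    exact (hS' u (hsub hu)).mono hsub
  have hcont : ContinuousOn (fun u => -((S u + σ u)ᵀ * (S u + σ u))) (Icc t T) :=
    (continuous_id.matrix_transpose.matrix_mul continuous_id).neg.comp_continuousOn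
      (((HasDerivWithinAt.continuousOn hS').add hσ).mono hsub)
  have hFTC := integral_eq_sub_of_hasDerivWithinAt_Icc ht.2 hderiv hcont
  rw [intervalIntegral.integral_neg, hST, zero_sub, neg_inj] at hFTC
  rw [hFTC]
  abel

/-- a solution `S` of the Riccati equation
`S' = −S² − σᵀS − Sσ − σᵀσ`, `S(T) = 0`, is symmetric, and `χ = S + σ`
satisfies `σ(t) = χ(t) − ∫ₜᵀ χ(u)ᵀχ(u) du`. -/
theorem stmt14 (T : ℝ) (hT : 0 < T) (d : ℕ)
    (σ : ℝ → Matrix (Fin d) (Fin d) ℝ)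
    (hσ : ContinuousOn σ (Set.Icc 0 T))
    (S : ℝ → Matrix (Fin d) (Fin d) ℝ)
    (hS : ∀ t ∈ Set.Icc (0:ℝ) T,
      HasDerivWithinAt S
        (-(S t * S t) - (σ t)ᵀ * S t - S t * σ t - (σ t)ᵀ * σ t)
        (Set.Icc (0:ℝ) T) t)
    (hST : S T = 0) :
    (∀ t ∈ Set.Icc (0:ℝ) T, (S t)ᵀ = S t) ∧
    (∀ t ∈ Set.Icc (0:ℝ) T,
      σ t = (S t + σ t) - ∫ u in t..T, (S u + σ u)ᵀ * (S u + σ u)) :=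
  stmt14_general T d σ hσ S hS hST
end

section
/- Let σ ∈ C¹([0,T]; ℝ^{d×d}), σ_A = (σ − σᵀ)/2, and let A ∈ C²([0,T]; ℝ^{d×d}) solve A'' − 2σ_A A' − σ'A = 0 with A(T) = I_d, A'(T) = σ(T), and suppose A(t) is invertible for every t. Set χ = A'A^{-1} and S = χ − σ. Then χ solves χ' = −χ² + 2σ_Aχ + σ' with χ(T) = σ(T), and S solves the Riccati equation S' = −S² − σᵀS − Sσ − σᵀσ with S(T) = 0; moreover S is symmetric and χ satisfies χ' + χᵀχ = σ' with χ(T) = σ(T). -/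
open Matrix

attribute [local instance] Matrix.normedAddCommGroup Matrix.normedSpace

/-!
The logarithmic derivative `χ = A' A⁻¹` satisfies `χ' = -χ² + (σ - σᵀ) χ + σ'` by the product rule
and `(A⁻¹)' = -A⁻¹ A' A⁻¹`, and `S = χ - σ` inherits the Riccati equation. Symmetry of `S` comes
from a conserved quantity: along solutions of `A'' = (σ - σᵀ) A' + σ' A` the matrix
`W = Aᵀ A' - A'ᵀ A - Aᵀ (σ - σᵀ) A` has zero derivative, it vanishes at `T`, and
`W = Aᵀ (S - Sᵀ) A`. Finally `χᵀ = χ - (σ - σᵀ)` turns `-χ² + (σ - σᵀ) χ` into `-χᵀ χ`.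
-/

section MatrixCalculus

variable {𝕜 n : Type*} [NontriviallyNormedField 𝕜] [CompleteSpace 𝕜] [Fintype n]
  {F G : 𝕜 → Matrix n n 𝕜} {F' G' : Matrix n n 𝕜} {s : Set 𝕜} {x : 𝕜}

theorem HasDerivWithinAt.matrix_mul (hF : HasDerivWithinAt F F' s x)
    (hG : HasDerivWithinAt G G' s x) :
    HasDerivWithinAt (fun t => F t * G t) (F' * G x + F x * G') s x := by
  rw [add_comm]
  exact (LinearMap.mul 𝕜 (Matrix n n 𝕜)).toContinuousBilinearMap.hasDerivWithinAt_of_bilinear hF hG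

theorem HasDerivWithinAt.matrix_transpose_s15 (hF : HasDerivWithinAt F F' s x) :
    HasDerivWithinAt (fun t => (F t)ᵀ) F'ᵀ s x :=
  (transposeLinearEquiv n n 𝕜 𝕜).toContinuousLinearEquiv.hasFDerivAt.comp_hasDerivWithinAt x hF

variable [DecidableEq n]

/-- `Matrix n n 𝕜` with the `L∞` operator norm: unlike the entrywise sup norm in force here, it
makes matrices a normed algebra, where `hasFDerivAt_ringInverse` applies. -/
def LinftyOpMatrix (n 𝕜 : Type*) : Type _ := Matrix n n 𝕜

noncomputable instance : NormedRing (LinftyOpMatrix n 𝕜) := Matrix.linftyOpNormedRing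
noncomputable instance : NormedAlgebra 𝕜 (LinftyOpMatrix n 𝕜) := Matrix.linftyOpNormedAlgebra
instance : CompleteSpace (LinftyOpMatrix n 𝕜) :=
  FiniteDimensional.complete 𝕜 (Matrix n n 𝕜)

noncomputable def toLinftyOp : Matrix n n 𝕜 ≃L[𝕜] LinftyOpMatrix n 𝕜 :=
  (LinearEquiv.refl 𝕜 (Matrix n n 𝕜)).toContinuousLinearEquiv

theorem HasDerivWithinAt.matrix_inv (hF : HasDerivWithinAt F F' s x) (hx : IsUnit (F x)) :
    HasDerivWithinAt (fun t => (F t)⁻¹) (-((F x)⁻¹ * F' * (F x)⁻¹)) s x := by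
  have hu : IsUnit (toLinftyOp (F x)) := hx
  have hval : ((hu.unit⁻¹ : (LinftyOpMatrix n 𝕜)ˣ) : LinftyOpMatrix n 𝕜) = (F x)⁻¹ := by
    rw [← Ring.inverse_unit, hu.unit_spec]
    exact (nonsing_inv_eq_ringInverse _).symm
  have hinv := hasFDerivAt_ringInverse (𝕜 := 𝕜) hu.unit
  rw [hu.unit_spec] at hinv
  have hG : HasDerivWithinAt (fun t => toLinftyOp (F t)) (toLinftyOp F') s x :=
    (toLinftyOp (n := n) (𝕜 := 𝕜)).hasFDerivAt.comp_hasDerivWithinAt x hF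
  have h : HasDerivWithinAt (fun t => toLinftyOp.symm (Ring.inverse (toLinftyOp (F t))))
      (toLinftyOp.symm (-(ContinuousLinearMap.mulLeftRight 𝕜 _ ↑hu.unit⁻¹ ↑hu.unit⁻¹)
        (toLinftyOp F'))) s x :=
    (toLinftyOp (n := n) (𝕜 := 𝕜)).symm.hasFDerivAt.comp_hasDerivWithinAt x
      (hinv.comp_hasDerivWithinAt x hG)
  rw [hval] at h
  exact h.congr (fun t _ => nonsing_inv_eq_ringInverse (F t)) (nonsing_inv_eq_ringInverse (F x))

theorem HasDerivWithinAt.matrix_mul_inv_of_second_order {A A' : 𝕜 → Matrix n n 𝕜}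
    {P Q : Matrix n n 𝕜} (hA : HasDerivWithinAt A (A' x) s x)
    (hA' : HasDerivWithinAt A' (P * A' x + Q * A x) s x) (hx : IsUnit (A x)) :
    HasDerivWithinAt (fun t => A' t * (A t)⁻¹)
      (-(A' x * (A x)⁻¹ * (A' x * (A x)⁻¹)) + P * (A' x * (A x)⁻¹) + Q) s x := by
  refine (hA'.matrix_mul (hA.matrix_inv hx)).congr_deriv ?_
  have hAA : A x * (A x)⁻¹ = 1 := mul_nonsing_inv _ ((isUnit_iff_isUnit_det _).mp hx)
  simp only [add_mul, mul_neg, mul_assoc, hAA, mul_one]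
  abel

end MatrixCalculus

section SkewWronskian

variable {R n : Type*} [CommRing R] [Fintype n]

def skewWronskian (σ A A' : Matrix n n R) : Matrix n n R :=
  Aᵀ * A' - A'ᵀ * A - Aᵀ * (σ - σᵀ) * A

theorem skewWronskian_eq_zero_iff [DecidableEq n] {σ A A' : Matrix n n R} (hA : IsUnit A) :
    skewWronskian σ A A' = 0 ↔ (A' * A⁻¹ - σ)ᵀ = A' * A⁻¹ - σ := by
  have hA' : A' = A' * A⁻¹ * A := by
    rw [nonsing_inv_mul_cancel_right _ _ ((isUnit_iff_isUnit_det _).mp hA)]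
  have hW : skewWronskian σ A A' = Aᵀ * ((A' * A⁻¹ - σ) - (A' * A⁻¹ - σ)ᵀ) * A := by
    rw [skewWronskian]
    nth_rw 1 [hA']
    nth_rw 2 [hA']
    simp only [transpose_mul, transpose_sub]
    noncomm_ring
  rw [hW, hA.mul_left_eq_zero, (A.isUnit_transpose.mpr hA).mul_right_eq_zero, sub_eq_zero,
    eq_comm]

theorem hasDerivWithinAt_skewWronskian {𝕜 : Type*} [NontriviallyNormedField 𝕜] [CompleteSpace 𝕜]
    {σ A A' : 𝕜 → Matrix n n 𝕜} {D : Matrix n n 𝕜} {s : Set 𝕜} {x : 𝕜}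
    (hσ : HasDerivWithinAt σ D s x) (hA : HasDerivWithinAt A (A' x) s x)
    (hA' : HasDerivWithinAt A' ((σ x - (σ x)ᵀ) * A' x + D * A x) s x) :
    HasDerivWithinAt (fun t => skewWronskian (σ t) (A t) (A' t)) 0 s x := by
  have hAT := hA.matrix_transpose_s15
  refine (((hAT.matrix_mul hA').sub (hA'.matrix_transpose_s15.matrix_mul hA)).sub
    ((hAT.matrix_mul (hσ.sub hσ.matrix_transpose_s15)).matrix_mul hA)).congr_deriv ?_
  simp only [Pi.sub_apply, transpose_add, transpose_mul, transpose_sub, transpose_transpose]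
  noncomm_ring

end SkewWronskian

theorem Convex.is_const_of_hasDerivWithinAt_zero {E : Type*} [NormedAddCommGroup E]
    [NormedSpace ℝ E] {f : ℝ → E} {s : Set ℝ} (hs : Convex ℝ s)
    (hf : ∀ x ∈ s, HasDerivWithinAt f 0 s x) {x y : ℝ} (hx : x ∈ s) (hy : y ∈ s) :
    f x = f y := by
  have h := hs.norm_image_sub_le_of_norm_hasDerivWithin_le hf (C := 0) (fun _ _ => by simp) hy hx
  rwa [zero_mul, norm_le_zero_iff, sub_eq_zero] at h

theorem stmt15_general (T : ℝ) (d : ℕ)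
    (σ σd : ℝ → Matrix (Fin d) (Fin d) ℝ)
    (hσd : ∀ t ∈ Set.Icc (0:ℝ) T, HasDerivWithinAt σ (σd t) (Set.Icc (0:ℝ) T) t)
    (A Ad : ℝ → Matrix (Fin d) (Fin d) ℝ)
    (hA : ∀ t ∈ Set.Icc (0:ℝ) T, HasDerivWithinAt A (Ad t) (Set.Icc (0:ℝ) T) t)
    (hAd : ∀ t ∈ Set.Icc (0:ℝ) T,
      HasDerivWithinAt Ad
        ((σ t - (σ t)ᵀ) * Ad t + σd t * A t)
        (Set.Icc (0:ℝ) T) t)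
    (hAT : A T = 1) (hAdT : Ad T = σ T)
    (hinv : ∀ t ∈ Set.Icc (0:ℝ) T, IsUnit (A t))
    (χ S : ℝ → Matrix (Fin d) (Fin d) ℝ)
    (hχdef : ∀ t, χ t = Ad t * (A t)⁻¹)
    (hSdef : ∀ t, S t = χ t - σ t) :
    (∀ t ∈ Set.Icc (0:ℝ) T,
      HasDerivWithinAt χ
        (-(χ t * χ t) + (σ t - (σ t)ᵀ) * χ t + σd t) (Set.Icc (0:ℝ) T) t) ∧
    χ T = σ T ∧
    (∀ t ∈ Set.Icc (0:ℝ) T,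
      HasDerivWithinAt S
        (-(S t * S t) - (σ t)ᵀ * S t - S t * σ t - (σ t)ᵀ * σ t)
        (Set.Icc (0:ℝ) T) t) ∧
    S T = 0 ∧
    (∀ t ∈ Set.Icc (0:ℝ) T, (S t)ᵀ = S t) ∧
    (∀ t ∈ Set.Icc (0:ℝ) T,
      HasDerivWithinAt χ (σd t - (χ t)ᵀ * χ t) (Set.Icc (0:ℝ) T) t) := by
  obtain rfl : S = fun t => χ t - σ t := funext hSdef
  obtain rfl : χ = fun t => Ad t * (A t)⁻¹ := funext hχdef
  have hχ t (ht : t ∈ Set.Icc 0 T) :=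
    (hA t ht).matrix_mul_inv_of_second_order (hAd t ht) (hinv t ht)
  have hχT : Ad T * (A T)⁻¹ = σ T := by simp [hAT, hAdT]
  have hW u (hu : u ∈ Set.Icc 0 T) :=
    hasDerivWithinAt_skewWronskian (hσd u hu) (hA u hu) (hAd u hu)
  have hsymm t (ht : t ∈ Set.Icc 0 T) :
      (Ad t * (A t)⁻¹ - σ t)ᵀ = Ad t * (A t)⁻¹ - σ t := by
    refine (skewWronskian_eq_zero_iff (hinv t ht)).mp ?_
    rw [(convex_Icc 0 T).is_const_of_hasDerivWithinAt_zero hW ht ⟨ht.1.trans ht.2, le_rfl⟩,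
      skewWronskian, hAT, hAdT]
    simp
  refine ⟨hχ, hχT, fun t ht => ((hχ t ht).sub (hσd t ht)).congr_deriv (by noncomm_ring),
    sub_eq_zero.mpr hχT, hsymm, fun t ht => (hχ t ht).congr_deriv ?_⟩
  have hχsymm : (Ad t * (A t)⁻¹)ᵀ = Ad t * (A t)⁻¹ - (σ t - (σ t)ᵀ) := by
    have h := hsymm t ht
    rw [transpose_sub, sub_eq_iff_eq_add] at h
    rw [h]
    abel
  rw [hχsymm]
  noncomm_ring

/-- with `A'' − 2σ_A A' − σ'A = 0`, `A(T) = I`, `A'(T) = σ(T)`,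
`A` non-singular, the functions `χ = A'A⁻¹` and `S = χ − σ` solve
`χ' = −χ² + 2σ_Aχ + σ'` and the Riccati equation respectively; moreover `S`
is symmetric and `χ' + χᵀχ = σ'`. -/
theorem stmt15 (T : ℝ) (hT : 0 < T) (d : ℕ)
    (σ σd : ℝ → Matrix (Fin d) (Fin d) ℝ)
    (hσd : ∀ t ∈ Set.Icc (0:ℝ) T, HasDerivWithinAt σ (σd t) (Set.Icc (0:ℝ) T) t)
    (hσdcont : ContinuousOn σd (Set.Icc 0 T))
    (A Ad : ℝ → Matrix (Fin d) (Fin d) ℝ)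
    (hA : ∀ t ∈ Set.Icc (0:ℝ) T, HasDerivWithinAt A (Ad t) (Set.Icc (0:ℝ) T) t)
    (hAd : ∀ t ∈ Set.Icc (0:ℝ) T,
      HasDerivWithinAt Ad
        ((σ t - (σ t)ᵀ) * Ad t + σd t * A t)
        (Set.Icc (0:ℝ) T) t)
    (hAT : A T = 1) (hAdT : Ad T = σ T)
    (hinv : ∀ t ∈ Set.Icc (0:ℝ) T, IsUnit (A t))
    (χ S : ℝ → Matrix (Fin d) (Fin d) ℝ)
    (hχdef : ∀ t, χ t = Ad t * (A t)⁻¹)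
    (hSdef : ∀ t, S t = χ t - σ t) :
    (∀ t ∈ Set.Icc (0:ℝ) T,
      HasDerivWithinAt χ
        (-(χ t * χ t) + (σ t - (σ t)ᵀ) * χ t + σd t) (Set.Icc (0:ℝ) T) t) ∧
    χ T = σ T ∧
    (∀ t ∈ Set.Icc (0:ℝ) T,
      HasDerivWithinAt S
        (-(S t * S t) - (σ t)ᵀ * S t - S t * σ t - (σ t)ᵀ * σ t)
        (Set.Icc (0:ℝ) T) t) ∧
    S T = 0 ∧
    (∀ t ∈ Set.Icc (0:ℝ) T, (S t)ᵀ = S t) ∧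
    (∀ t ∈ Set.Icc (0:ℝ) T,
      HasDerivWithinAt χ (σd t - (χ t)ᵀ * χ t) (Set.Icc (0:ℝ) T) t) :=
  stmt15_general T d σ σd hσd A Ad hA hAd hAT hAdT hinv χ S hχdef hSdef
end

section
/- Let χ ∈ C([0,T]; ℝ^{d×d}) and α ∈ C¹([0,T]; ℝ^{d×d}) with α' = χα, α(T) = I_d, and α(t) invertible for all t. Define F_χ : C([0,T];ℝ^d) → C([0,T];ℝ^d) by (F_χ w)(t) = −∫₀^t χ(s) w(s) ds and F̃_χ by (F̃_χ w)(t) = −α(t) ∫₀^t (α^{-1})'(s) w(s) ds. Then (I + F_χ) ∘ (I + F̃_χ) = (I + F̃_χ) ∘ (I + F_χ) = I on C([0,T];ℝ^d) (restricted to continuous paths with w(0)=0), i.e., I + F̃_χ is the two-sided inverse of I + F_χ. -/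
/-
Write `β = α⁻¹`; then `β' = -βχ`. For `u = w + F_χ w = w - ∫₀ᵗ χw`, the path `β(t) ∫₀ᵗ χw` has
derivative `βχu`, so `F̃_χ u(t) = α(t) β(t) ∫₀ᵗ χw = -F_χ w(t)`. For `v = w + F̃_χ w`, the
path `F̃_χ w = α ∫₀ᵗ βχw` has derivative `χα∫₀ᵗ βχw + χw = χv`, so `F_χ v = -F̃_χ w`. Both
identities are thus instances of the fundamental theorem of calculus on `[0, T]`.
-/

open MeasureTheory Matrix intervalIntegral

attribute [local instance] Matrix.normedAddCommGroup Matrix.normedSpace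

/-- The transformation `F_χ`: `(F_χ w)(t) = −∫₀ᵗ χ(s) w(s) ds`. -/
noncomputable def Fchi {d : ℕ} (χ : ℝ → Matrix (Fin d) (Fin d) ℝ)
    (w : ℝ → Fin d → ℝ) : ℝ → Fin d → ℝ :=
  fun t => -∫ s in (0:ℝ)..t, (χ s) *ᵥ w s

/-- The transformation `F̃_χ`: `(F̃_χ w)(t) = −α(t) ∫₀ᵗ (α⁻¹)'(s) w(s) ds`,
where `(α⁻¹)' = −α⁻¹χ` since `α' = χα`. -/
noncomputable def Ftilde {d : ℕ} (χ α : ℝ → Matrix (Fin d) (Fin d) ℝ)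
    (w : ℝ → Fin d → ℝ) : ℝ → Fin d → ℝ :=
  fun t => -((α t) *ᵥ (∫ s in (0:ℝ)..t, (-((α s)⁻¹ * χ s)) *ᵥ w s))

section MatrixCalculus

variable {𝕜 : Type*} [NontriviallyNormedField 𝕜] {m n : Type*} [Fintype n]
  {X : Type*} [TopologicalSpace X]

theorem ContinuousOn.matrix_mulVec {A : X → Matrix m n 𝕜} {v : X → n → 𝕜} {s : Set X}
    (hA : ContinuousOn A s) (hv : ContinuousOn v s) :
    ContinuousOn (fun x => A x *ᵥ v x) s :=
  (continuous_fst.matrix_mulVec continuous_snd).comp_continuousOn (hA.prodMk hv)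

theorem HasDerivWithinAt.matrix_mulVec [Fintype m] [CompleteSpace 𝕜] {A : 𝕜 → Matrix m n 𝕜}
    {v : 𝕜 → n → 𝕜} {A' : Matrix m n 𝕜} {v' : n → 𝕜} {s : Set 𝕜} {t : 𝕜}
    (hA : HasDerivWithinAt A A' s t) (hv : HasDerivWithinAt v v' s t) :
    HasDerivWithinAt (fun r => A r *ᵥ v r) (A' *ᵥ v t + A t *ᵥ v') s t := by
  let mulVecCLM : Matrix m n 𝕜 →L[𝕜] (n → 𝕜) →L[𝕜] (m → 𝕜) :=
    LinearMap.toContinuousLinearMap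
      (LinearMap.toContinuousLinearMap.toLinearMap ∘ₗ Matrix.mulVecBilin 𝕜 𝕜)
  exact (mulVecCLM.hasFDerivAt.comp_hasDerivWithinAt t hA).clm_apply hv

variable [DecidableEq n]

theorem HasDerivWithinAt.matrix_inv_s17 {A : 𝕜 → Matrix n n 𝕜} {A' : Matrix n n 𝕜}
    {s : Set 𝕜} {t : 𝕜} (hA : HasDerivWithinAt A A' s t)
    (hunit : ∀ r ∈ s, IsUnit (A r)) (ht : t ∈ s) :
    HasDerivWithinAt (fun r => (A r)⁻¹) (-((A t)⁻¹ * A' * (A t)⁻¹)) s t := by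
  have hdet : ∀ r ∈ s, IsUnit (A r).det := fun r hr => (isUnit_iff_isUnit_det _).mp (hunit r hr)
  have hcont : ContinuousWithinAt (fun r => (A r)⁻¹) s t := by
    refine (continuousAt_matrix_inv _ ?_).comp_continuousWithinAt hA.continuousWithinAt
    rw [Ring.inverse_eq_inv']
    exact continuousAt_inv₀ (hdet t ht).ne_zero
  refine hasDerivWithinAt_iff_tendsto_slope.mpr ?_
  have hlim := ((hcont.mono_left (nhdsWithin_mono t Set.sdiff_subset)).mul
    (hasDerivWithinAt_iff_tendsto_slope.mp hA).neg).mul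
    (tendsto_const_nhds (x := (A t)⁻¹))
  rw [Matrix.mul_neg, Matrix.neg_mul] at hlim
  refine hlim.congr' ?_
  filter_upwards [self_mem_nhdsWithin] with r hr
  have hresolvent : (A r)⁻¹ * (A t - A r) * (A t)⁻¹ = (A r)⁻¹ - (A t)⁻¹ := by
    rw [Matrix.mul_sub, Matrix.sub_mul, mul_assoc, Matrix.mul_nonsing_inv _ (hdet t ht),
      Matrix.nonsing_inv_mul _ (hdet r hr.1), mul_one, one_mul]
  rw [slope_def_module, slope_def_module, ← smul_neg, neg_sub, Matrix.mul_smul,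
    Matrix.smul_mul, hresolvent]

theorem HasDerivWithinAt.matrix_inv_of_eq_mul {A B : 𝕜 → Matrix n n 𝕜} {s : Set 𝕜} {t : 𝕜}
    (hA : HasDerivWithinAt A (B t * A t) s t) (hunit : ∀ r ∈ s, IsUnit (A r)) (ht : t ∈ s) :
    HasDerivWithinAt (fun r => (A r)⁻¹) (-((A t)⁻¹ * B t)) s t := by
  have h := hA.matrix_inv_s17 hunit ht
  rwa [← mul_assoc, mul_assoc, mul_nonsing_inv _ ((isUnit_iff_isUnit_det _).mp (hunit t ht)),
    mul_one] at h

end MatrixCalculus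

section FundamentalTheorem

variable {E : Type*} [NormedAddCommGroup E] [NormedSpace ℝ E] [CompleteSpace E] {a b t : ℝ}

theorem ContinuousOn.hasDerivWithinAt_integral_Icc {f : ℝ → E}
    (hf : ContinuousOn f (Set.Icc a b)) (ht : t ∈ Set.Icc a b) :
    HasDerivWithinAt (fun r => ∫ s in a..r, f s) (f t) (Set.Icc a b) t := by
  have : Fact (t ∈ Set.Icc a b) := ⟨ht⟩
  have hsub : Set.uIcc a t ⊆ Set.Icc a b := by
    rw [Set.uIcc_of_le ht.1]
    exact Set.Icc_subset_Icc_right ht.2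
  exact integral_hasDerivWithinAt_right (hf.mono hsub).intervalIntegrable
    (hf.stronglyMeasurableAtFilter_nhdsWithin measurableSet_Icc t) (hf t ht)

theorem integral_eq_sub_of_hasDerivWithinAt_Icc {g g' : ℝ → E}
    (hg : ∀ r ∈ Set.Icc a b, HasDerivWithinAt g (g' r) (Set.Icc a b) r)
    (hg' : ContinuousOn g' (Set.Icc a b)) (ht : t ∈ Set.Icc a b) :
    ∫ s in a..t, g' s = g t - g a := by
  have hsub : Set.Icc a t ⊆ Set.Icc a b := Set.Icc_subset_Icc_right ht.2
  refine integral_eq_sub_of_hasDeriv_right_of_le ht.1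
    (fun r hr => (hg r (hsub hr)).continuousWithinAt.mono hsub) (fun r hr => ?_)
    ((hg'.mono (by rwa [Set.uIcc_of_le ht.1])).intervalIntegrable)
  have hr' : r ∈ Set.Ioo a b := ⟨hr.1, hr.2.trans_le ht.2⟩
  exact ((hg r (Set.Ioo_subset_Icc_self hr')).hasDerivAt
    (Icc_mem_nhds hr'.1 hr'.2)).hasDerivWithinAt

end FundamentalTheorem

section TwoSidedInverse

variable {d : ℕ} {T : ℝ} {χ α : ℝ → Matrix (Fin d) (Fin d) ℝ} {w : ℝ → Fin d → ℝ}

theorem Ftilde_eq_mulVec_integral (t : ℝ) :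
    Ftilde χ α w t = α t *ᵥ ∫ s in (0:ℝ)..t, ((α s)⁻¹ * χ s) *ᵥ w s := by
  simp only [Ftilde, neg_mulVec, intervalIntegral.integral_neg, mulVec_neg, neg_neg]

theorem integral_inv_mul_mulVec_add_Fchi (hχ : ContinuousOn χ (Set.Icc 0 T))
    (hα : ∀ t ∈ Set.Icc (0:ℝ) T, HasDerivWithinAt α (χ t * α t) (Set.Icc 0 T) t)
    (hinv : ∀ t ∈ Set.Icc (0:ℝ) T, IsUnit (α t)) (hw : ContinuousOn w (Set.Icc 0 T))
    {t : ℝ} (ht : t ∈ Set.Icc (0:ℝ) T) :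
    ∫ s in (0:ℝ)..t, ((α s)⁻¹ * χ s) *ᵥ (w s + Fchi χ w s)
      = (α t)⁻¹ *ᵥ ∫ s in (0:ℝ)..t, χ s *ᵥ w s := by
  set I := fun r => ∫ s in (0:ℝ)..r, χ s *ᵥ w s
  have hI : ∀ r ∈ Set.Icc (0:ℝ) T, HasDerivWithinAt I (χ r *ᵥ w r) (Set.Icc 0 T) r :=
    fun r hr => (hχ.matrix_mulVec hw).hasDerivWithinAt_integral_Icc hr
  have hinv' := fun r hr => (hα r hr).matrix_inv_of_eq_mul hinv hr
  have hinvc : ContinuousOn (fun r => (α r)⁻¹) (Set.Icc 0 T) :=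
    fun r hr => (hinv' r hr).continuousWithinAt
  have hFchi : ContinuousOn (Fchi χ w) (Set.Icc 0 T) :=
    fun r hr => (hI r hr).continuousWithinAt.neg
  have hderiv : ∀ r ∈ Set.Icc (0:ℝ) T, HasDerivWithinAt (fun r => (α r)⁻¹ *ᵥ I r)
      (((α r)⁻¹ * χ r) *ᵥ (w r + Fchi χ w r)) (Set.Icc 0 T) r := by
    intro r hr
    convert (hinv' r hr).matrix_mulVec (hI r hr) using 1
    simp only [Fchi, I, neg_mulVec, mulVec_add, mulVec_neg, mulVec_mulVec]
    abel
  rw [integral_eq_sub_of_hasDerivWithinAt_Icc hderiv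
    ((hinvc.mul hχ).matrix_mulVec (hw.add hFchi)) ht]
  simp [I]

theorem integral_mulVec_add_Ftilde (hχ : ContinuousOn χ (Set.Icc 0 T))
    (hα : ∀ t ∈ Set.Icc (0:ℝ) T, HasDerivWithinAt α (χ t * α t) (Set.Icc 0 T) t)
    (hinv : ∀ t ∈ Set.Icc (0:ℝ) T, IsUnit (α t)) (hw : ContinuousOn w (Set.Icc 0 T))
    {t : ℝ} (ht : t ∈ Set.Icc (0:ℝ) T) :
    ∫ s in (0:ℝ)..t, χ s *ᵥ (w s + Ftilde χ α w s) = Ftilde χ α w t := by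
  set K := fun r => ∫ s in (0:ℝ)..r, ((α s)⁻¹ * χ s) *ᵥ w s
  have hinvc : ContinuousOn (fun r => (α r)⁻¹) (Set.Icc 0 T) := fun r hr =>
    ((hα r hr).matrix_inv_of_eq_mul hinv hr).continuousWithinAt
  have hK : ∀ r ∈ Set.Icc (0:ℝ) T,
      HasDerivWithinAt K (((α r)⁻¹ * χ r) *ᵥ w r) (Set.Icc 0 T) r :=
    fun r hr => ((hinvc.mul hχ).matrix_mulVec hw).hasDerivWithinAt_integral_Icc hr
  have hderiv : ∀ r ∈ Set.Icc (0:ℝ) T, HasDerivWithinAt (fun r => α r *ᵥ K r)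
      (χ r *ᵥ (w r + Ftilde χ α w r)) (Set.Icc 0 T) r := by
    intro r hr
    convert (hα r hr).matrix_mulVec (hK r hr) using 1
    rw [Ftilde_eq_mulVec_integral, mulVec_add, mulVec_mulVec, mulVec_mulVec, ← mul_assoc,
      mul_nonsing_inv _ ((isUnit_iff_isUnit_det _).mp (hinv r hr)), one_mul, add_comm]
  have hFtilde : ContinuousOn (Ftilde χ α w) (Set.Icc 0 T) := fun r hr =>
    (hderiv r hr).continuousWithinAt.congr (fun _ _ => Ftilde_eq_mulVec_integral _)
      (Ftilde_eq_mulVec_integral _)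
  rw [integral_eq_sub_of_hasDerivWithinAt_Icc hderiv (hχ.matrix_mulVec (hw.add hFtilde)) ht,
    Ftilde_eq_mulVec_integral]
  simp [K]

end TwoSidedInverse

theorem stmt17_general (T : ℝ) (d : ℕ)
    (χ α : ℝ → Matrix (Fin d) (Fin d) ℝ)
    (hχ : ContinuousOn χ (Set.Icc 0 T))
    (hα : ∀ t ∈ Set.Icc (0:ℝ) T,
      HasDerivWithinAt α (χ t * α t) (Set.Icc (0:ℝ) T) t)
    (hinv : ∀ t ∈ Set.Icc (0:ℝ) T, IsUnit (α t))
    (w : ℝ → Fin d → ℝ)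
    (hw : ContinuousOn w (Set.Icc 0 T)) :
    (∀ t ∈ Set.Icc (0:ℝ) T,
      (fun r => w r + Fchi χ w r) t
        + Ftilde χ α (fun r => w r + Fchi χ w r) t = w t) ∧
    (∀ t ∈ Set.Icc (0:ℝ) T,
      (fun r => w r + Ftilde χ α w r) t
        + Fchi χ (fun r => w r + Ftilde χ α w r) t = w t) := by
  constructor
  · intro t ht
    dsimp only
    rw [Ftilde_eq_mulVec_integral, integral_inv_mul_mulVec_add_Fchi hχ hα hinv hw ht,
      mulVec_mulVec, mul_nonsing_inv _ ((isUnit_iff_isUnit_det _).mp (hinv t ht)), one_mulVec,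
      Fchi]
    abel
  · intro t ht
    dsimp only
    rw [Fchi, integral_mulVec_add_Ftilde hχ hα hinv hw ht]
    abel

/-- `I + F̃_χ` is a two-sided inverse of `I + F_χ` on continuous
paths starting at `0`. -/
theorem stmt17 (T : ℝ) (hT : 0 < T) (d : ℕ)
    (χ α : ℝ → Matrix (Fin d) (Fin d) ℝ)
    (hχ : ContinuousOn χ (Set.Icc 0 T))
    (hα : ∀ t ∈ Set.Icc (0:ℝ) T,
      HasDerivWithinAt α (χ t * α t) (Set.Icc (0:ℝ) T) t)
    (hαT : α T = 1)
    (hinv : ∀ t ∈ Set.Icc (0:ℝ) T, IsUnit (α t))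
    (w : ℝ → Fin d → ℝ)
    (hw : ContinuousOn w (Set.Icc 0 T)) (hw0 : w 0 = 0) :
    (∀ t ∈ Set.Icc (0:ℝ) T,
      (fun r => w r + Fchi χ w r) t
        + Ftilde χ α (fun r => w r + Fchi χ w r) t = w t) ∧
    (∀ t ∈ Set.Icc (0:ℝ) T,
      (fun r => w r + Ftilde χ α w r) t
        + Fchi χ (fun r => w r + Ftilde χ α w r) t = w t) :=
  stmt17_general T d χ α hχ hα hinv w hw
end
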